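/- Continuity of the analysis mean map: if R > 0, P, Q ≥ 0, and c = |H|²|R^{-1}|, then |B(X,Q) − B(Y,P)| ≤ |X−Y|(1 + c|Q|) + |Q−P| |H| |R^{-1}| (1 + c|P|) |d − H Y|, where B(X,Q) = X + K(Q)(d − HX). -/

import Mathlib

/-!
Write `S(Q) = H Q H* + R`, so that `K(Q) = Q H* S(Q)⁻¹`. Cauchy–Schwarz for the form `⟪R ·, ·⟫`
gives `‖u‖² ≤ ‖R⁻¹‖ ⟪R u, u⟫`, and since `S(Q) ≥ R` this yields `‖S(Q)⁻¹‖ ≤ ‖R⁻¹‖`, hence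
`‖K(Q)‖ ≤ ‖Q‖ ‖H‖ ‖R⁻¹‖`. The resolvent identity `S(P)⁻¹ - S(Q)⁻¹ = S(P)⁻¹ H (Q - P) H* S(Q)⁻¹`
turns the difference of gains into `K(Q) - K(P) = (1 - K(P) H) (Q - P) H* S(Q)⁻¹`, and
`B(X,Q) - B(Y,P) = (X - Y) - K(Q) H (X - Y) + (K(Q) - K(P)) (d - H Y)`; bounding each factor
gives the estimate.
-/

open ContinuousLinearMap RealInnerProductSpace

variable {V W : Type*} [NormedAddCommGroup V] [InnerProductSpace ℝ V] [CompleteSpace V]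
  [NormedAddCommGroup W] [InnerProductSpace ℝ W] [CompleteSpace W]

/-- The Kalman gain operator `K(Q) = Q H* (H Q H* + R)⁻¹`. -/
noncomputable def kalmanGain (H : V →L[ℝ] W) (R : W →L[ℝ] W) (Q : V →L[ℝ] V) : W →L[ℝ] V :=
  (Q ∘L ContinuousLinearMap.adjoint H) ∘L
    Ring.inverse (H ∘L Q ∘L ContinuousLinearMap.adjoint H + R)

/-- The analysis mean map `B(X,Q) = X + K(Q)(d − H X)`. -/
noncomputable def analysisMean (H : V →L[ℝ] W) (R : W →L[ℝ] W) (d : W)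
    (X : V) (Q : V →L[ℝ] V) : V :=
  X + kalmanGain H R Q (d - H X)

namespace ContinuousLinearMap

theorem apply_ringInverse_apply {R M : Type*} [Semiring R] [TopologicalSpace M] [AddCommMonoid M]
    [Module R M] {T : M →L[R] M} (hT : IsUnit T) (v : M) : T (Ring.inverse T v) = v := by
  rw [← mul_apply_eq_comp, Ring.mul_inverse_cancel T hT, one_apply_eq_self]

variable {E : Type*} [NormedAddCommGroup E] [InnerProductSpace ℝ E]

theorem isUnit_of_coercive [CompleteSpace E] {T : E →L[ℝ] E} {α : ℝ} (hα : 0 < α)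
    (h : ∀ u, α * ‖u‖ ^ 2 ≤ ⟪T u, u⟫) : IsUnit T :=
  T.isUnit_of_forall_le_norm_inner_map (c := α.toNNReal) (Real.toNNReal_pos.mpr hα) fun u => by
    rw [Real.coe_toNNReal α hα.le, mul_comm]
    exact (h u).trans (le_abs_self _)

theorem IsPositive.inner_mul_inner_le {T : E →L[ℝ] E} (hT : T.IsPositive) (u v : E) :
    ⟪T u, v⟫ * ⟪T v, u⟫ ≤ ⟪T u, u⟫ * ⟪T v, v⟫ :=
  LinearMap.BilinForm.apply_mul_apply_le_of_forall_zero_le ((innerₗ E).comp (T : E →ₗ[ℝ] E))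
    hT.inner_nonneg_left u v

theorem inner_apply_self_le_of_le {S T : E →L[ℝ] E} (h : S ≤ T) (u : E) :
    ⟪S u, u⟫ ≤ ⟪T u, u⟫ := by
  have := (le_def S T).mp h |>.inner_nonneg_left u
  rwa [sub_apply, inner_sub_left, sub_nonneg] at this

theorem IsPositive.norm_sq_le_norm_inverse_mul_inner {T : E →L[ℝ] E} (hT : T.IsPositive)
    (hTu : IsUnit T) (u : E) :
    ‖u‖ ^ 2 ≤ ‖Ring.inverse T‖ * ⟪T u, u⟫ := by
  set v := Ring.inverse T u
  have hTv : T v = u := apply_ringInverse_apply hTu u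
  -- Cauchy–Schwarz for the form `⟪T ·, ·⟫` at `T⁻¹ u` and `u`
  have hcs := hT.inner_mul_inner_le v u
  rw [hTv, hT.inner_left_eq_inner_right, hTv, real_inner_self_eq_norm_sq] at hcs
  have hvu : ⟪u, v⟫ ≤ ‖Ring.inverse T‖ * ‖u‖ ^ 2 := calc
    ⟪u, v⟫ ≤ ‖u‖ * ‖v‖ := real_inner_le_norm u v
    _ ≤ ‖u‖ * (‖Ring.inverse T‖ * ‖u‖) := by gcongr; exact le_opNorm _ _
    _ = ‖Ring.inverse T‖ * ‖u‖ ^ 2 := by ring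
  rcases (norm_nonneg u).eq_or_lt with hu | hu
  · rw [← hu]; simp [mul_nonneg (norm_nonneg _) (hT.inner_nonneg_left u)]
  · have := hcs.trans (mul_le_mul_of_nonneg_right hvu (hT.inner_nonneg_left u))
    nlinarith [pow_pos hu 2]

theorem norm_ringInverse_le_of_le {S T : E →L[ℝ] E} (hS : S.IsPositive)
    (hSu : IsUnit S) (hST : S ≤ T) : ‖Ring.inverse T‖ ≤ ‖Ring.inverse S‖ := by
  by_cases hTu : IsUnit T
  swap
  · rw [Ring.inverse_non_unit T hTu, norm_zero]; exact norm_nonneg _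
  refine opNorm_le_bound _ (norm_nonneg _) fun v => ?_
  set u := Ring.inverse T v
  have hTuv : T u = v := apply_ringInverse_apply hTu v
  have key : ‖u‖ ^ 2 ≤ ‖Ring.inverse S‖ * ‖v‖ * ‖u‖ := calc
    ‖u‖ ^ 2 ≤ ‖Ring.inverse S‖ * ⟪S u, u⟫ := hS.norm_sq_le_norm_inverse_mul_inner hSu u
    _ ≤ ‖Ring.inverse S‖ * ⟪T u, u⟫ := by gcongr; exact inner_apply_self_le_of_le hST u
    _ ≤ ‖Ring.inverse S‖ * (‖v‖ * ‖u‖) := by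
      gcongr; rw [hTuv]; exact real_inner_le_norm v u
    _ = ‖Ring.inverse S‖ * ‖v‖ * ‖u‖ := by ring
  rcases (norm_nonneg u).eq_or_lt with hu | hu
  · rw [← hu]; positivity
  · nlinarith

end ContinuousLinearMap

section KalmanGain

variable (H : V →L[ℝ] W) (R : W →L[ℝ] W)

noncomputable def innovationCov (Q : V →L[ℝ] V) : W →L[ℝ] W :=
  H ∘L Q ∘L adjoint H + R

theorem kalmanGain_eq (Q : V →L[ℝ] V) :
    kalmanGain H R Q = Q ∘L adjoint H ∘L Ring.inverse (innovationCov H R Q) :=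
  rfl

theorem le_innovationCov {Q : V →L[ℝ] V} (hQ : Q.IsPositive) : R ≤ innovationCov H R Q := by
  rw [le_def, innovationCov, add_sub_cancel_right]
  exact hQ.conj_adjoint H

theorem norm_kalmanGain_le {Q : V →L[ℝ] V} (hQ : Q.IsPositive) (hR : R.IsPositive)
    (hRu : IsUnit R) : ‖kalmanGain H R Q‖ ≤ ‖Q‖ * ‖H‖ * ‖Ring.inverse R‖ := calc
  ‖kalmanGain H R Q‖ ≤ ‖Q‖ * (‖adjoint H‖ * ‖Ring.inverse (innovationCov H R Q)‖) := by
    rw [kalmanGain_eq]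
    exact (opNorm_comp_le _ _).trans (by gcongr; exact opNorm_comp_le _ _)
  _ ≤ ‖Q‖ * ‖H‖ * ‖Ring.inverse R‖ := by
    rw [LinearIsometryEquiv.norm_map, ← mul_assoc]
    gcongr
    exact norm_ringInverse_le_of_le hR hRu (le_innovationCov H R hQ)

theorem kalmanGain_sub_kalmanGain {P Q : V →L[ℝ] V}
    (h : IsUnit (innovationCov H R P) ↔ IsUnit (innovationCov H R Q)) :
    kalmanGain H R Q - kalmanGain H R P =
      (1 - kalmanGain H R P ∘L H) ∘L (Q - P) ∘L adjoint H ∘L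
        Ring.inverse (innovationCov H R Q) := by
  have hinv := Ring.inverse_sub_inverse h
  have hdiff : innovationCov H R Q - innovationCov H R P = H ∘L (Q - P) ∘L adjoint H := by
    simp only [innovationCov, add_sub_add_right_eq_sub, sub_comp, comp_sub]
  rw [hdiff] at hinv
  ext w
  have hinv_w := congr($hinv w)
  simp only [sub_apply, mul_apply_eq_comp, comp_apply] at hinv_w
  simp only [kalmanGain_eq, sub_apply, comp_apply, one_apply_eq_self]
  rw [← hinv_w]
  simp only [map_sub]
  abel

theorem norm_kalmanGain_sub_le {P Q : V →L[ℝ] V} (hP : P.IsPositive) (hQ : Q.IsPositive)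
    (hR : R.IsPositive) (hRu : IsUnit R)
    (h : IsUnit (innovationCov H R P) ↔ IsUnit (innovationCov H R Q)) :
    ‖kalmanGain H R Q - kalmanGain H R P‖ ≤
      (1 + ‖H‖ ^ 2 * ‖Ring.inverse R‖ * ‖P‖) * ‖Q - P‖ * ‖H‖ * ‖Ring.inverse R‖ := by
  have hfirst : ‖1 - kalmanGain H R P ∘L H‖ ≤ 1 + ‖H‖ ^ 2 * ‖Ring.inverse R‖ * ‖P‖ := calc
    _ ≤ ‖(1 : V →L[ℝ] V)‖ + ‖kalmanGain H R P‖ * ‖H‖ :=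
      (norm_sub_le _ _).trans (by gcongr; exact opNorm_comp_le _ _)
    _ ≤ 1 + ‖P‖ * ‖H‖ * ‖Ring.inverse R‖ * ‖H‖ := by
      gcongr
      · exact norm_id_le
      · exact norm_kalmanGain_le H R hP hR hRu
    _ = 1 + ‖H‖ ^ 2 * ‖Ring.inverse R‖ * ‖P‖ := by ring
  have hinv := norm_ringInverse_le_of_le hR hRu (le_innovationCov H R hQ)
  rw [kalmanGain_sub_kalmanGain H R h]
  calc _ ≤ ‖1 - kalmanGain H R P ∘L H‖ * (‖Q - P‖ * (‖adjoint H‖ *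
        ‖Ring.inverse (innovationCov H R Q)‖)) :=
      (opNorm_comp_le _ _).trans <| by
        gcongr; exact (opNorm_comp_le _ _).trans (by gcongr; exact opNorm_comp_le _ _)
    _ ≤ (1 + ‖H‖ ^ 2 * ‖Ring.inverse R‖ * ‖P‖) * (‖Q - P‖ * (‖H‖ * ‖Ring.inverse R‖)) := by
      rw [LinearIsometryEquiv.norm_map]
      gcongr
    _ = _ := by ring

theorem isUnit_innovationCov {Q : V →L[ℝ] V} (hQ : Q.IsPositive) {α : ℝ} (hα : 0 < α)
    (hR : ∀ u, α * ‖u‖ ^ 2 ≤ ⟪R u, u⟫) : IsUnit (innovationCov H R Q) :=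
  isUnit_of_coercive hα fun u =>
    (hR u).trans (inner_apply_self_le_of_le (le_innovationCov H R hQ) u)

end KalmanGain

theorem analysisMean_sub_analysisMean (H : V →L[ℝ] W) (R : W →L[ℝ] W) (d : W) (X Y : V)
    (P Q : V →L[ℝ] V) :
    analysisMean H R d X Q - analysisMean H R d Y P =
      (X - Y) - kalmanGain H R Q (H (X - Y)) +
        (kalmanGain H R Q - kalmanGain H R P) (d - H Y) := by
  simp only [analysisMean, map_sub, sub_apply]
  abel

/-- Continuity of the analysis mean map: if `R > 0`, `P, Q ≥ 0`, and `c = |H|²|R⁻¹|`,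
then `|B(X,Q) − B(Y,P)| ≤ |X−Y|(1 + c|Q|) + |Q−P| |H| |R⁻¹| (1 + c|P|) |d − H Y|`. -/
theorem analysisMean_continuity
    (H : V →L[ℝ] W) (R : W →L[ℝ] W) (d : W) (X Y : V) (P Q : V →L[ℝ] V)
    (hP : P.IsPositive) (hQ : Q.IsPositive) (hRsym : IsSelfAdjoint R)
    (hRpos : ∃ α : ℝ, 0 < α ∧ ∀ u : W, α * ‖u‖ ^ 2 ≤ ⟪R u, u⟫) :
    ‖analysisMean H R d X Q - analysisMean H R d Y P‖
      ≤ ‖X - Y‖ * (1 + (‖H‖ ^ 2 * ‖(Ring.inverse R : W →L[ℝ] W)‖) * ‖Q‖)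
        + ‖Q - P‖ * ‖H‖ * ‖(Ring.inverse R : W →L[ℝ] W)‖ *
          (1 + (‖H‖ ^ 2 * ‖(Ring.inverse R : W →L[ℝ] W)‖) * ‖P‖) * ‖d - H Y‖ := by
  obtain ⟨α, hα, hRα⟩ := hRpos
  have hR : R.IsPositive :=
    (isPositive_iff' R).mpr ⟨hRsym, fun u => (by positivity : 0 ≤ α * ‖u‖ ^ 2).trans (hRα u)⟩
  have hRu : IsUnit R := isUnit_of_coercive hα hRα
  have hK := norm_kalmanGain_le H R hQ hR hRu
  have hdK := norm_kalmanGain_sub_le H R hP hQ hR hRu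
    (iff_of_true (isUnit_innovationCov H R hP hα hRα) (isUnit_innovationCov H R hQ hα hRα))
  rw [analysisMean_sub_analysisMean]
  calc _ ≤ ‖X - Y‖ + ‖kalmanGain H R Q‖ * (‖H‖ * ‖X - Y‖)
        + ‖kalmanGain H R Q - kalmanGain H R P‖ * ‖d - H Y‖ := by
        refine (norm_add_le _ _).trans (add_le_add ((norm_sub_le _ _).trans ?_) (le_opNorm _ _))
        gcongr
        exact (le_opNorm _ _).trans (by gcongr; exact le_opNorm _ _)
    _ ≤ ‖X - Y‖ + ‖Q‖ * ‖H‖ * ‖Ring.inverse R‖ * (‖H‖ * ‖X - Y‖)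
        + (1 + ‖H‖ ^ 2 * ‖Ring.inverse R‖ * ‖P‖) * ‖Q - P‖ * ‖H‖ * ‖Ring.inverse R‖
          * ‖d - H Y‖ := by gcongr
    _ = _ := by ring
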